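/- Worked lifted example evaluation: for any function g : ℤ → ℤ and any w : ℤ, ∑_{f : D → Finset.Icc 1 5} ∏_{x ∈ Icc (1 + g w) (10 + g w)} ∏_{y ∈ Icc 1 10 \ {8}} ∑_{z ∈ Icc 1 10} ((f (x - g w, y, w + 3) : ℤ) * z) = 825^90, where D = Icc 1 10 × (Icc 1 10 \ {8}) × {w + 3} viewed as a finite set of integer triples and f ranges over all functions from D to {1,…,5}. -/
import Mathlib

theorem lifted_example (g : ℤ → ℤ) (w : ℤ) :
    (∑ f : (↥((Finset.Icc (1 : ℤ) 10) ×ˢ ((Finset.Icc (1 : ℤ) 10).erase 8)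
              ×ˢ ({w + 3} : Finset ℤ)) → ↥(Finset.Icc (1 : ℤ) 5)),
      ∏ x ∈ Finset.Icc (1 + g w) (10 + g w),
        ∏ y ∈ (Finset.Icc (1 : ℤ) 10).erase 8,
          ∑ z ∈ Finset.Icc (1 : ℤ) 10,
            (if h : (x - g w, y, w + 3) ∈
                (Finset.Icc (1 : ℤ) 10) ×ˢ ((Finset.Icc (1 : ℤ) 10).erase 8)
                  ×ˢ ({w + 3} : Finset ℤ)
             then ((f ⟨(x - g w, y, w + 3), h⟩ : ℤ) * z) else 0))
      = 825 ^ 90 := by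
  set D := (Finset.Icc (1 : ℤ) 10) ×ˢ ((Finset.Icc (1 : ℤ) 10).erase 8)
              ×ˢ ({w + 3} : Finset ℤ) with hD
  have key : ∀ f : ↥D → ↥(Finset.Icc (1 : ℤ) 5),
      (∏ x ∈ Finset.Icc (1 + g w) (10 + g w),
        ∏ y ∈ (Finset.Icc (1 : ℤ) 10).erase 8,
          ∑ z ∈ Finset.Icc (1 : ℤ) 10,
            (if h : (x - g w, y, w + 3) ∈ D
             then ((f ⟨(x - g w, y, w + 3), h⟩ : ℤ) * z) else 0))
      = ∏ p : ↥D, ∑ z ∈ Finset.Icc (1 : ℤ) 10, (f p : ℤ) * z := by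
    intro f
    set T : ℤ × ℤ × ℤ → ℤ := fun q => ∑ z ∈ Finset.Icc (1 : ℤ) 10,
      if h : q ∈ D then (f ⟨q, h⟩ : ℤ) * z else 0 with hT
    have h1 : Finset.Icc (1 + g w) (10 + g w)
        = (Finset.Icc (1 : ℤ) 10).map (addLeftEmbedding (g w)) := by
      rw [Finset.map_add_left_Icc]; ring_nf
    have lhs_eq : (∏ x ∈ Finset.Icc (1 + g w) (10 + g w),
        ∏ y ∈ (Finset.Icc (1 : ℤ) 10).erase 8,
          ∑ z ∈ Finset.Icc (1 : ℤ) 10,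
            (if h : (x - g w, y, w + 3) ∈ D
             then ((f ⟨(x - g w, y, w + 3), h⟩ : ℤ) * z) else 0))
        = ∏ x ∈ Finset.Icc (1 : ℤ) 10,
            ∏ y ∈ (Finset.Icc (1 : ℤ) 10).erase 8, T (x, y, w + 3) := by
      rw [h1, Finset.prod_map]
      simp [hT, addLeftEmbedding_apply, add_sub_cancel_left]
    have rhs_eq : (∏ p : ↥D, ∑ z ∈ Finset.Icc (1 : ℤ) 10, (f p : ℤ) * z)
        = ∏ x ∈ Finset.Icc (1 : ℤ) 10,
            ∏ y ∈ (Finset.Icc (1 : ℤ) 10).erase 8, T (x, y, w + 3) := by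
      have : (∏ p : ↥D, ∑ z ∈ Finset.Icc (1 : ℤ) 10, (f p : ℤ) * z)
          = ∏ p ∈ D.attach, T p.1 := by
        rw [Finset.univ_eq_attach]
        refine Finset.prod_congr rfl fun p _ => ?_
        refine Finset.sum_congr rfl fun z _ => ?_
        rw [dif_pos p.2]
      rw [this, Finset.prod_attach D T, hD, Finset.prod_product]
      exact Finset.prod_congr rfl fun x _ => by rw [Finset.prod_product]; simp
    rw [lhs_eq, rhs_eq]
  simp only [key]
  rw [← Fintype.prod_sum (f := fun (_ : ↥D) (v : ↥(Finset.Icc (1 : ℤ) 5)) =>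
      ∑ z ∈ Finset.Icc (1 : ℤ) 10, (v : ℤ) * z)]
  have hfac : (∑ v : ↥(Finset.Icc (1 : ℤ) 5),
      ∑ z ∈ Finset.Icc (1 : ℤ) 10, (v : ℤ) * z) = 825 := by
    rw [Finset.sum_coe_sort (Finset.Icc (1 : ℤ) 5)
      (fun v => ∑ z ∈ Finset.Icc (1 : ℤ) 10, v * z)]
    decide
  rw [Finset.prod_congr rfl fun p _ => hfac, Finset.prod_const, Finset.card_univ]
  have hcard : Fintype.card ↥D = 90 := by
    rw [Fintype.card_coe, hD]
    simp [Finset.card_product, Int.card_Icc, Finset.card_erase_of_mem]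
  rw [hcard]
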